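/- (Guth) Let Σ denote the punctured torus T² ∖ {pt} equipped with a symplectic (area) form of total area one, and let ℝ² carry the standard area form. For every R > 0 there exists a smooth symplectic embedding of the open ball B⁴_R of radius R in ℝ⁴ (with its standard symplectic form dp_1∧dq_1 + dp_2∧dq_2) into the product Σ × ℝ² with the product symplectic form. -/

import Mathlib

/-!
Guth's lemma (Lemma 2): for every `R > 0` the ball `B⁴_R` embeds symplectically into
`Σ × ℝ²`, where `Σ = T² ∖ {pt}` carries a symplectic form of total area one.

We use the flat model `T² = ℝ²/ℤ²` with its standard area form (which has total area
one; by Moser's theorem any symplectic form of total area one on the punctured torus is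
symplectomorphic to this one, with the puncture placed at the lattice point).  A smooth
symplectic embedding `B⁴_R → Σ × ℝ²` is then the same thing as a smooth map
`F : B⁴_R → ℝ² × ℝ²` which
* pulls the product of the standard area forms back to the standard symplectic form of
  `ℝ⁴` (the covering `ℝ² → T²` being a local symplectomorphism),
* avoids the lattice `ℤ²` (the lifts of the puncture) in its first component, and
* is injective modulo the deck transformation group `ℤ²` acting on the first component.
-/

open MeasureTheory Metric

noncomputable section

abbrev Pl := EuclideanSpace ℝ (Fin 2)
abbrev E4 := EuclideanSpace ℝ (Fin 4)

/-- The standard area form of `ℝ²`. -/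
def area2 (a b : Pl) : ℝ := a 0 * b 1 - a 1 * b 0

/-- The standard symplectic form `dp₁∧dq₁ + dp₂∧dq₂` of `ℝ⁴`,
with coordinates `(p₁,q₁,p₂,q₂)`. -/
def symp4 (u v : E4) : ℝ := u 0 * v 1 - u 1 * v 0 + (u 2 * v 3 - u 3 * v 2)

/-- A point of the lattice `ℤ² ⊂ ℝ²` (a lift of the puncture of `T² ∖ {pt}`). -/
def IsLatticePt (a : Pl) : Prop := ∀ i, ∃ z : ℤ, a i = (z : ℝ)

/-! ### Auxiliary constructions for Guth's embedding.

The embedding is `F(x) = ((ε x₀ + g(x₁) x₃ + ½, x₁/ε), (x₂ + G(x₁)/ε, x₃))` where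
`g(s) = 2R (1 - cos (2π s / ε))` and `G' = g`.  It is symplectic for *any* smooth `g`.
As `g` is `ε`-periodic and vanishes on `ε ℤ`, while `G` increases by `2Rε` over each
period, the map is injective modulo `ℤ²` and avoids the lattice. -/

namespace Guth

/-- scale parameter -/
def ee (R : ℝ) : ℝ := (1 + 2*R)⁻¹

/-- frequency -/
def om (R : ℝ) : ℝ := 2 * Real.pi / ee R

/-- the periodic shear profile -/
def gg (R s : ℝ) : ℝ := 2*R*(1 - Real.cos (om R * s))

/-- derivative of `gg` -/
def gd (R s : ℝ) : ℝ := 2*R*(Real.sin (om R * s) * om R)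

/-- antiderivative of `gg` -/
def GG (R s : ℝ) : ℝ := 2*R*s - 2*R/om R * Real.sin (om R * s)

lemma hee {R : ℝ} (hR : 0 < R) : 0 < ee R := by
  have : (0:ℝ) < 1 + 2*R := by linarith
  exact inv_pos.2 this

lemma hom {R : ℝ} (hR : 0 < R) : om R ≠ 0 := by
  have h1 : ee R ≠ 0 := ne_of_gt (hee hR)
  have h2 : Real.pi ≠ 0 := Real.pi_ne_zero
  unfold om
  positivity

lemma heR {R : ℝ} (hR : 0 < R) : ee R * R < 1/2 := by
  have h : (0:ℝ) < 1 + 2*R := by linarith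
  rw [ee, inv_mul_eq_div, div_lt_iff₀ h]
  linarith

/-- key exact trigonometric phase identity -/
lemma om_mul_shift (R : ℝ) (hR : 0 < R) (s : ℝ) (k : ℤ) :
    om R * (s + ee R * k) = om R * s + k * (2 * Real.pi) := by
  have h1 : ee R ≠ 0 := ne_of_gt (hee hR)
  unfold om
  field_simp

lemma gg_shift (R : ℝ) (hR : 0 < R) (s : ℝ) (k : ℤ) :
    gg R (s + ee R * k) = gg R s := by
  unfold gg
  rw [om_mul_shift R hR s k, Real.cos_add_int_mul_two_pi]

lemma GG_shift (R : ℝ) (hR : 0 < R) (s : ℝ) (k : ℤ) :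
    GG R (s + ee R * k) = GG R s + 2*R*(ee R)*k := by
  unfold GG
  rw [om_mul_shift R hR s k, Real.sin_add_int_mul_two_pi]
  ring

lemma gg_lattice (R : ℝ) (hR : 0 < R) (k : ℤ) : gg R (ee R * k) = 0 := by
  have := gg_shift R hR 0 k
  simp at this
  rw [this]
  simp [gg]

lemma hasDerivAt_gg (R : ℝ) (t : ℝ) : HasDerivAt (gg R) (gd R t) t := by
  have h1 : HasDerivAt (fun s : ℝ => om R * s) (om R) t := by
    simpa using (hasDerivAt_id t).const_mul (om R)
  have hc : HasDerivAt (fun s : ℝ => Real.cos (om R * s))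
      (-Real.sin (om R * t) * om R) t := (Real.hasDerivAt_cos (om R * t)).comp t h1
  have h2 := (hc.const_sub 1).const_mul (2*R)
  refine h2.congr_deriv ?_
  unfold gd
  ring

lemma hasDerivAt_GG (R : ℝ) (hR : 0 < R) (t : ℝ) : HasDerivAt (GG R) (gg R t) t := by
  have h1 : HasDerivAt (fun s : ℝ => om R * s) (om R) t := by
    simpa using (hasDerivAt_id t).const_mul (om R)
  have hs : HasDerivAt (fun s : ℝ => Real.sin (om R * s))
      (Real.cos (om R * t) * om R) t := (Real.hasDerivAt_sin (om R * t)).comp t h1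
  have h2 := ((hasDerivAt_id t).const_mul (2*R)).sub (hs.const_mul (2*R/om R))
  refine h2.congr_deriv ?_
  have hω : om R ≠ 0 := hom hR
  unfold gg
  field_simp

/-- coordinate projections as continuous linear maps -/
def pr (i : Fin 4) : E4 →L[ℝ] ℝ := EuclideanSpace.proj i

/-- the scalar components of the embedding -/
def AA (R : ℝ) (x : E4) : ℝ := ee R * x 0 + gg R (x 1) * x 3 + 1/2
def BB (R : ℝ) (x : E4) : ℝ := (ee R)⁻¹ * x 1
def CC (R : ℝ) (x : E4) : ℝ := x 2 + (ee R)⁻¹ * GG R (x 1)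
def DD (x : E4) : ℝ := x 3

/-- their derivatives, as continuous linear maps -/
def AA' (R : ℝ) (x : E4) : E4 →L[ℝ] ℝ :=
  ee R • pr 0 + ((gd R (x 1) * x 3) • pr 1 + gg R (x 1) • pr 3)
def BB' (R : ℝ) : E4 →L[ℝ] ℝ := (ee R)⁻¹ • pr 1
def CC' (R : ℝ) (x : E4) : E4 →L[ℝ] ℝ := pr 2 + ((ee R)⁻¹ * gg R (x 1)) • pr 1
def DD' : E4 →L[ℝ] ℝ := pr 3

/-- a vector in the plane -/
def V2 (a b : ℝ) : Pl := (WithLp.equiv 2 (Fin 2 → ℝ)).symm ![a, b]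

/-- pairing of two scalar CLMs into a plane-valued CLM -/
def mk2 (f g : E4 →L[ℝ] ℝ) : E4 →L[ℝ] Pl :=
  ((PiLp.continuousLinearEquiv 2 ℝ (fun _ : Fin 2 => ℝ)).symm :
      (Fin 2 → ℝ) →L[ℝ] Pl).comp (ContinuousLinearMap.pi ![f, g])

/-- the embedding -/
def FF (R : ℝ) (x : E4) : Pl × Pl := (V2 (AA R x) (BB R x), V2 (CC R x) (DD x))

/-- its derivative -/
def DF (R : ℝ) (x : E4) : E4 →L[ℝ] (Pl × Pl) :=
  (mk2 (AA' R x) (BB' R)).prod (mk2 (CC' R x) DD')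

lemma hasFDerivAt_coord (x : E4) (i : Fin 4) :
    HasFDerivAt (fun x : E4 => x i) (pr i) x := (pr i).hasFDerivAt

lemma hasFDerivAt_AA (R : ℝ) (x : E4) : HasFDerivAt (AA R) (AA' R x) x := by
  have h0 : HasFDerivAt (fun x : E4 => ee R * x 0) (ee R • pr 0) x :=
    (hasFDerivAt_coord x 0).const_mul (ee R)
  have hg1 : HasFDerivAt (fun x : E4 => gg R (x 1)) (gd R (x 1) • pr 1) x :=
    by have := (hasDerivAt_gg R (x 1)).comp_hasFDerivAt x (hasFDerivAt_coord x 1); exact this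
  have hmul := hg1.mul (hasFDerivAt_coord x 3)
  have := (h0.add hmul).add_const (1/2 : ℝ)
  refine this.congr_fderiv ?_
  unfold AA'
  ext u
  simp [pr, smul_smul]
  ring

lemma hasFDerivAt_BB (R : ℝ) (x : E4) : HasFDerivAt (BB R) (BB' R) x :=
  (hasFDerivAt_coord x 1).const_mul ((ee R)⁻¹)

lemma hasFDerivAt_CC (R : ℝ) (hR : 0 < R) (x : E4) : HasFDerivAt (CC R) (CC' R x) x := by
  have hG1 : HasFDerivAt (fun x : E4 => GG R (x 1)) (gg R (x 1) • pr 1) x :=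
    by have := (hasDerivAt_GG R hR (x 1)).comp_hasFDerivAt x (hasFDerivAt_coord x 1); exact this
  have := (hasFDerivAt_coord x 2).add (hG1.const_mul ((ee R)⁻¹))
  refine this.congr_fderiv ?_
  unfold CC'
  ext u
  simp [pr, smul_smul]

lemma hasFDerivAt_FF (R : ℝ) (hR : 0 < R) (x : E4) : HasFDerivAt (FF R) (DF R x) x := by
  have key : ∀ (f1 f2 : E4 → ℝ) (d1 d2 : E4 →L[ℝ] ℝ),
      HasFDerivAt f1 d1 x → HasFDerivAt f2 d2 x →
      HasFDerivAt (fun x => V2 (f1 x) (f2 x)) (mk2 d1 d2) x := by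
    intro f1 f2 d1 d2 h1 h2
    have hpi : HasFDerivAt (fun x : E4 => (![f1 x, f2 x] : Fin 2 → ℝ))
        (ContinuousLinearMap.pi ![d1, d2]) x := by
      apply hasFDerivAt_pi''
      intro i
      fin_cases i <;>
        simp only [ContinuousLinearMap.proj_pi, Matrix.cons_val_zero, Matrix.cons_val_one,
          Matrix.head_cons, Fin.mk_one, Fin.zero_eta] <;>
        [exact h1; exact h2]
    exact (((PiLp.continuousLinearEquiv 2 ℝ (fun _ : Fin 2 => ℝ)).symm :
      (Fin 2 → ℝ) →L[ℝ] Pl).hasFDerivAt).comp x hpi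
  exact (key _ _ _ _ (hasFDerivAt_AA R x) (hasFDerivAt_BB R x)).prodMk
    (key _ _ _ _ (hasFDerivAt_CC R hR x) ((hasFDerivAt_coord x 3 : _)))

lemma contDiff_gg (R : ℝ) : ContDiff ℝ (⊤ : ℕ∞) (gg R) := by
  unfold gg
  exact contDiff_const.mul (contDiff_const.sub
    (Real.contDiff_cos.comp (contDiff_const.mul contDiff_id)))

lemma contDiff_GG (R : ℝ) : ContDiff ℝ (⊤ : ℕ∞) (GG R) := by
  unfold GG
  exact (contDiff_const.mul contDiff_id).sub (contDiff_const.mul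
    (Real.contDiff_sin.comp (contDiff_const.mul contDiff_id)))

lemma contDiff_coord (i : Fin 4) : ContDiff ℝ (⊤ : ℕ∞) (fun x : E4 => x i) := (pr i).contDiff

lemma contDiff_FF (R : ℝ) : ContDiff ℝ (⊤ : ℕ∞) (FF R) := by
  have hA : ContDiff ℝ (⊤ : ℕ∞) (AA R) :=
    ((contDiff_const.mul (contDiff_coord 0)).add
      (((contDiff_gg R).comp (contDiff_coord 1)).mul (contDiff_coord 3))).add contDiff_const
  have hB : ContDiff ℝ (⊤ : ℕ∞) (BB R) := contDiff_const.mul (contDiff_coord 1)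
  have hC : ContDiff ℝ (⊤ : ℕ∞) (CC R) :=
    (contDiff_coord 2).add (contDiff_const.mul ((contDiff_GG R).comp (contDiff_coord 1)))
  have hD : ContDiff ℝ (⊤ : ℕ∞) (DD) := contDiff_coord 3
  have key : ∀ (f1 f2 : E4 → ℝ), ContDiff ℝ (⊤ : ℕ∞) f1 → ContDiff ℝ (⊤ : ℕ∞) f2 →
      ContDiff ℝ (⊤ : ℕ∞) (fun x => V2 (f1 x) (f2 x)) := by
    intro f1 f2 h1 h2
    have : ContDiff ℝ (⊤ : ℕ∞) (fun x : E4 => (![f1 x, f2 x] : Fin 2 → ℝ)) := by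
      apply contDiff_pi.mpr
      intro i
      fin_cases i
      · simpa using h1
      · simpa using h2
    exact (((PiLp.continuousLinearEquiv 2 ℝ (fun _ : Fin 2 => ℝ)).symm :
      (Fin 2 → ℝ) →L[ℝ] Pl).contDiff).comp this
  exact (key _ _ hA hB).prodMk (key _ _ hC hD)

lemma abs_coord_le_norm (x : E4) (i : Fin 4) : |x i| ≤ ‖x‖ := by
  rw [EuclideanSpace.norm_eq]
  have h1 : |x i| = Real.sqrt (‖x i‖^2) := by rw [Real.sqrt_sq_eq_abs]; simp
  rw [h1]
  apply Real.sqrt_le_sqrt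
  exact Finset.single_le_sum (f := fun j => ‖x j‖^2) (fun j _ => by positivity)
    (Finset.mem_univ i)

lemma abs_coord_lt {R : ℝ} {x : E4} (hx : x ∈ ball (0 : E4) R) (i : Fin 4) : |x i| < R :=
  lt_of_le_of_lt (abs_coord_le_norm x i) (by simpa [mem_ball_zero_iff] using hx)

lemma int_abs_lt_one {k : ℤ} (h : |(k : ℝ)| < 1) : k = 0 := by
  have h2 : ((|k| : ℤ) : ℝ) < 1 := by rw [Int.cast_abs]; exact h
  have h3 : |k| < 1 := by exact_mod_cast h2
  have h4 := abs_lt.mp h3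
  omega

lemma int_half (z : ℤ) : (1/2 : ℝ) ≤ |(z : ℝ) - 1/2| := by
  rcases le_or_gt z 0 with h | h
  · have h' : (z : ℝ) ≤ 0 := by exact_mod_cast h
    rw [abs_sub_comm, abs_of_nonneg (by linarith)]
    linarith
  · have h' : (1 : ℝ) ≤ z := by exact_mod_cast h
    rw [abs_of_nonneg (by linarith)]
    linarith

lemma area_identity (e p q : ℝ) (he : e ≠ 0) (u0 u1 u2 u3 v0 v1 v2 v3 : ℝ) :
    (e*u0 + p*u1 + q*u3) * (e⁻¹*v1) - (e⁻¹*u1) * (e*v0 + p*v1 + q*v3)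
      + ((u2 + e⁻¹*q*u1) * v3 - u3 * (v2 + e⁻¹*q*v1))
      = u0*v1 - u1*v0 + (u2*v3 - u3*v2) := by
  field_simp
  ring

end Guth

open Guth

/-- **Guth's lemma.**  For every `R > 0` there is a smooth symplectic embedding of
`B⁴_R` into `(T² ∖ {pt}) × ℝ²`, the punctured torus carrying a symplectic form of
total area one. -/
theorem ball_embeds_in_punctured_torus_times_plane (R : ℝ) (hR : 0 < R) :
    ∃ F : E4 → Pl × Pl,
      ContDiffOn ℝ (⊤ : ℕ∞) F (ball 0 R) ∧
      -- the differential pulls the product symplectic form back to the standard one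
      (∀ x ∈ ball (0 : E4) R, ∀ u v : E4,
        area2 (fderiv ℝ F x u).1 (fderiv ℝ F x v).1 +
          area2 (fderiv ℝ F x u).2 (fderiv ℝ F x v).2 = symp4 u v) ∧
      -- the image avoids the puncture
      (∀ x ∈ ball (0 : E4) R, ¬ IsLatticePt (F x).1) ∧
      -- injectivity as a map into (ℝ²/ℤ²) × ℝ²
      (∀ x ∈ ball (0 : E4) R, ∀ y ∈ ball (0 : E4) R,
        IsLatticePt ((F x).1 - (F y).1) → (F x).2 = (F y).2 → x = y) := by
  have hε : 0 < ee R := hee hR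
  have hε' : ee R ≠ 0 := ne_of_gt hε
  refine ⟨FF R, (contDiff_FF R).contDiffOn, ?_, ?_, ?_⟩
  · -- symplectic condition
    intro x _ u v
    rw [(hasFDerivAt_FF R hR x).fderiv]
    show area2 (mk2 (AA' R x) (BB' R) u) (mk2 (AA' R x) (BB' R) v) +
      area2 (mk2 (CC' R x) DD' u) (mk2 (CC' R x) DD' v) = symp4 u v
    have happ : ∀ (f g : E4 →L[ℝ] ℝ) (w : E4),
        (mk2 f g w) 0 = f w ∧ (mk2 f g w) 1 = g w := fun f g w => ⟨rfl, rfl⟩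
    simp only [area2, (happ _ _ _).1, (happ _ _ _).2]
    have prapp : ∀ (i : Fin 4) (w : E4), (EuclideanSpace.proj (𝕜 := ℝ) i) w = w i :=
      fun _ _ => rfl
    simp only [AA', BB', CC', DD', ContinuousLinearMap.add_apply,
      ContinuousLinearMap.smul_apply, pr, prapp, smul_eq_mul]
    have := area_identity (ee R) (gd R (x 1) * x 3) (gg R (x 1)) hε'
      (u 0) (u 1) (u 2) (u 3) (v 0) (v 1) (v 2) (v 3)
    unfold symp4
    linarith [this]
  · -- avoids the puncture
    intro x hx h
    obtain ⟨k, hk⟩ := h 1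
    obtain ⟨z, hz⟩ := h 0
    have hk' : (FF R x).1 1 = (ee R)⁻¹ * x 1 := rfl
    have hx1 : x 1 = ee R * k := by
      rw [hk'] at hk
      field_simp at hk
      linarith [hk]
    have hz' : (FF R x).1 0 = ee R * x 0 + gg R (x 1) * x 3 + 1/2 := rfl
    rw [hz', hx1, gg_lattice R hR k] at hz
    have h0 : ee R * x 0 = (z : ℝ) - 1/2 := by linarith [hz]
    have hlt : |ee R * x 0| < 1/2 := by
      rw [abs_mul, abs_of_pos hε]
      calc ee R * |x 0| < ee R * R := by
            exact mul_lt_mul_of_pos_left (abs_coord_lt hx 0) hε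
        _ < 1/2 := heR hR
    rw [h0] at hlt
    exact absurd hlt (not_lt.2 (int_half z))
  · -- injectivity mod ℤ²
    intro x hx y hy hlat heq
    obtain ⟨k, hk⟩ := hlat 1
    have hsub1 : ((FF R x).1 - (FF R y).1) 1 = (ee R)⁻¹ * x 1 - (ee R)⁻¹ * y 1 := by
      simp only [PiLp.sub_apply]; rfl
    rw [hsub1] at hk
    have hk2 : x 1 - y 1 = ee R * k := by
      have h' : (ee R)⁻¹ * (x 1 - y 1) = (k : ℝ) := by rw [mul_sub]; exact hk
      calc x 1 - y 1 = ee R * ((ee R)⁻¹ * (x 1 - y 1)) := by field_simp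
        _ = ee R * k := by rw [h']
    have hx1 : x 1 = y 1 + ee R * k := by linarith
    -- second components
    have h2a : (FF R x).2 0 = (FF R y).2 0 := by rw [heq]
    have h2b : (FF R x).2 1 = (FF R y).2 1 := by rw [heq]
    have hx3 : x 3 = y 3 := h2b
    have hCC : x 2 + (ee R)⁻¹ * GG R (x 1) = y 2 + (ee R)⁻¹ * GG R (y 1) := h2a
    have hGG : GG R (x 1) = GG R (y 1) + 2*R*(ee R)*k := by
      rw [hx1]; exact GG_shift R hR (y 1) k
    have hx2 : x 2 - y 2 = -(2*R) * k := by
      rw [hGG] at hCC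
      have hexp : (ee R)⁻¹ * (GG R (y 1) + 2*R*(ee R)*k)
          = (ee R)⁻¹ * GG R (y 1) + 2*R*k := by
        field_simp
      rw [hexp] at hCC
      linarith
    have hk0 : k = 0 := by
      apply int_abs_lt_one
      have h1 : |x 2 - y 2| < 2*R := by
        calc |x 2 - y 2| ≤ |x 2| + |y 2| := abs_sub (x 2) (y 2)
          _ < R + R := add_lt_add (abs_coord_lt hx 2) (abs_coord_lt hy 2)
          _ = 2*R := by ring
      rw [hx2] at h1
      rw [abs_mul] at h1
      have h2R : |(-(2*R) : ℝ)| = 2*R := by rw [abs_neg, abs_of_pos (by linarith)]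
      rw [h2R] at h1
      have := (mul_lt_iff_lt_one_right (by linarith : (0:ℝ) < 2*R)).1 h1
      linarith [this]
    have hx1' : x 1 = y 1 := by rw [hx1, hk0]; simp
    have hgg : gg R (x 1) = gg R (y 1) := by rw [hx1']
    obtain ⟨z, hz⟩ := hlat 0
    have hsub0 : ((FF R x).1 - (FF R y).1) 0 =
        (ee R * x 0 + gg R (x 1) * x 3 + 1/2) - (ee R * y 0 + gg R (y 1) * y 3 + 1/2) := by
      simp only [PiLp.sub_apply]; rfl
    rw [hsub0, hgg, hx3] at hz
    have hz0 : ee R * (x 0 - y 0) = (z : ℝ) := by rw [← hz]; ring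
    have hz00 : z = 0 := by
      apply int_abs_lt_one
      rw [← hz0, abs_mul, abs_of_pos hε]
      have : |x 0 - y 0| < 2*R := by
        calc |x 0 - y 0| ≤ |x 0| + |y 0| := abs_sub (x 0) (y 0)
          _ < R + R := add_lt_add (abs_coord_lt hx 0) (abs_coord_lt hy 0)
          _ = 2*R := by ring
      calc ee R * |x 0 - y 0| < ee R * (2*R) := mul_lt_mul_of_pos_left this hε
        _ = 2 * (ee R * R) := by ring
        _ < 2 * (1/2) := by linarith [heR hR]
        _ = 1 := by ring
    have hx0 : x 0 = y 0 := by
      rw [hz00] at hz0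
      simp at hz0
      rcases hz0 with h | h
      · exact absurd h hε'
      · linarith [h]
    have hx2' : x 2 = y 2 := by rw [hk0] at hx2; simp at hx2; linarith [hx2]
    ext i
    fin_cases i
    · exact hx0
    · exact hx1'
    · exact hx2'
    · exact hx3
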